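/- Suppose σ is a Nash equilibrium of the explicit payoff-matrix game with entries u(s_j, μ_k) (where μ_k is the distribution induced by pure strategy s_k), and suppose additionally that for all s_j ∈ Λ, ∑_k σ(s_k) u(s_j, μ_k) = u(s_j, μ^σ), where μ^σ is the distribution induced by σ. Then σ is a Nash equilibrium of the mean-field empirical game, i.e., ∑_j σ(s_j) u(s_j, μ^σ) ≥ u(s', μ^σ) for all s' ∈ Λ. -/

import Mathlib

open Finset

theorem sum_sum_mul_payoff_eq_of_consistent {ι M : Type*} [Fintype ι]
    (u : ι → M → ℝ) (μk : ι → M) (μσ : M) (σ : ι → ℝ)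
    (hlin : ∀ j, ∑ k, σ k * u j (μk k) = u j μσ) :
    ∑ j, ∑ k, σ j * σ k * u j (μk k) = ∑ j, σ j * u j μσ := by
  refine sum_congr rfl fun j _ => ?_
  rw [← hlin j, mul_sum]
  exact sum_congr rfl fun k _ => mul_assoc _ _ _

theorem matrixNE_to_MFG_NE_general {n : ℕ} {M : Type*}
    (u : Fin n → M → ℝ) (μk : Fin n → M) (μσ : M)
    (σ : Fin n → ℝ)
    (hmatrixNE : ∀ s' : Fin n,
      ∑ k, σ k * u s' (μk k) ≤ ∑ j, ∑ k, σ j * σ k * u j (μk k))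
    (hlin : ∀ j : Fin n, ∑ k, σ k * u j (μk k) = u j μσ) :
    ∀ s' : Fin n, u s' μσ ≤ ∑ j, σ j * u j μσ := by
  intro s'
  calc u s' μσ = ∑ k, σ k * u s' (μk k) := (hlin s').symm
    _ ≤ ∑ j, ∑ k, σ j * σ k * u j (μk k) := hmatrixNE s'
    _ = ∑ j, σ j * u j μσ := sum_sum_mul_payoff_eq_of_consistent u μk μσ σ hlin

/-- If σ is a NE of the explicit payoff-matrix game with entries u(s_j, μ_k), and
additionally ∑_k σ(s_k) u(s_j, μ_k) = u(s_j, μ^σ) for all j, then σ is a NE of the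
mean-field empirical game.  `M` is the space of population distributions, `μk k`
the distribution induced by pure strategy `s_k`, `μσ` the one induced by σ. -/
theorem matrixNE_to_MFG_NE {n : ℕ} {M : Type*}
    (u : Fin n → M → ℝ) (μk : Fin n → M) (μσ : M)
    (σ : Fin n → ℝ) (hσ : σ ∈ stdSimplex ℝ (Fin n))
    (hmatrixNE : ∀ s' : Fin n,
      ∑ k, σ k * u s' (μk k) ≤ ∑ j, ∑ k, σ j * σ k * u j (μk k))
    (hlin : ∀ j : Fin n, ∑ k, σ k * u j (μk k) = u j μσ) :
    ∀ s' : Fin n, u s' μσ ≤ ∑ j, σ j * u j μσ :=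
  matrixNE_to_MFG_NE_general u μk μσ σ hmatrixNE hlin
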